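/- Let s, t > 0 and suppose EXP-(s,t)-WT holds. Then for every M > 0 there exists T > 0 such that for every d ≥ 1 and all integers k_1,…,k_d with k_i ≥ 2 and λ_{k_i} > 0 for all i, if d + max_{1≤i≤d} k_i ≥ T then (d^t + (∑_{i=1}^d log γ_i⁻¹)^s + (∑_{i=1}^d log λ_{k_i}⁻¹)^s) / (∑_{i=1}^d log k_i) ≥ M. -/

import Mathlib

open Filter Real Set Topology
open scoped ENNReal NNReal

noncomputable section

/-- The weighted eigenvalues `λ_{k,j}`: `1` if `j = 1`, and `γ_k · λ_j` if `j ≥ 2`. -/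
def lamKJ (γ lam : ℕ → ℝ) (k j : ℕ) : ℝ := if j = 1 then 1 else γ k * lam j

/-- The information complexity `n(ε,d)`: the extended-natural cardinality of the set of
`d`-tuples of positive integers `(n_1,…,n_d)` with `λ_{1,n_1} ⋯ λ_{d,n_d} > ε²`. -/
def infoN (γ lam : ℕ → ℝ) (ε : ℝ) (d : ℕ) : ℕ∞ :=
  {n : Fin d → ℕ | (∀ i, 1 ≤ n i) ∧ ε ^ 2 < ∏ i, lamKJ γ lam (i.1 + 1) (n i)}.encard

/-- EXP-SPT with a given exponent `p`: there is `C ≥ 0` with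
`n(ε,d) ≤ C (1 + log ε⁻¹)^p` for all `d ≥ 1` and `ε ∈ (0,1]`. -/
def ExpSPTwith (γ lam : ℕ → ℝ) (p : ℝ) : Prop :=
  ∃ C : ℝ, 0 ≤ C ∧ ∀ d : ℕ, 1 ≤ d → ∀ ε : ℝ, 0 < ε → ε ≤ 1 →
    (infoN γ lam ε d : ℝ≥0∞) ≤ ENNReal.ofReal (C * (1 + Real.log ε⁻¹) ^ p)

/-- Exponential strong polynomial tractability. -/
def ExpSPT (γ lam : ℕ → ℝ) : Prop := ∃ p : ℝ, 0 ≤ p ∧ ExpSPTwith γ lam p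

/-- Exponential polynomial tractability: there are `C, q, p ≥ 0` with
`n(ε,d) ≤ C d^q (1 + log ε⁻¹)^p` for all `d ≥ 1` and `ε ∈ (0,1]`. -/
def ExpPT (γ lam : ℕ → ℝ) : Prop :=
  ∃ C q p : ℝ, 0 ≤ C ∧ 0 ≤ q ∧ 0 ≤ p ∧ ∀ d : ℕ, 1 ≤ d → ∀ ε : ℝ, 0 < ε → ε ≤ 1 →
    (infoN γ lam ε d : ℝ≥0∞) ≤ ENNReal.ofReal (C * (d : ℝ) ^ q * (1 + Real.log ε⁻¹) ^ p)

/-- EXP-QPT with a given exponent `t`. -/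
def ExpQPTwith (γ lam : ℕ → ℝ) (t : ℝ) : Prop :=
  ∃ C : ℝ, 0 ≤ C ∧ ∀ d : ℕ, 1 ≤ d → ∀ ε : ℝ, 0 < ε → ε ≤ 1 →
    (infoN γ lam ε d : ℝ≥0∞) ≤
      ENNReal.ofReal (C * Real.exp (t * (1 + Real.log d) * (1 + Real.log (1 + Real.log ε⁻¹))))

/-- Exponential quasi-polynomial tractability. -/
def ExpQPT (γ lam : ℕ → ℝ) : Prop := ∃ t : ℝ, 0 ≤ t ∧ ExpQPTwith γ lam t

/-- Exponential `(s,t)`-weak tractability: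
`log max(1, n(ε,d)) / (d^t + (1 + log ε⁻¹)^s) → 0` as `d + ε⁻¹ → ∞`
(in particular `n(ε,d)` is finite for all such `d, ε`). -/
def ExpSTWT (γ lam : ℕ → ℝ) (s t : ℝ) : Prop :=
  ∀ δ : ℝ, 0 < δ → ∃ T : ℝ, ∀ d : ℕ, 1 ≤ d → ∀ ε : ℝ, 0 < ε → ε ≤ 1 →
    T ≤ (d : ℝ) + ε⁻¹ →
    ∃ N : ℕ, infoN γ lam ε d = (N : ℕ∞) ∧
      Real.log (max 1 (N : ℝ)) / ((d : ℝ) ^ t + (1 + Real.log ε⁻¹) ^ s) < δ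

/-- `j(ε) = max { j ≥ 1 : λ_j > ε² }` (a well-defined maximum when `λ_j → 0`). -/
def jEps (lam : ℕ → ℝ) (ε : ℝ) : ℕ := sSup {j : ℕ | 1 ≤ j ∧ ε ^ 2 < lam j}

/-- `d(ε) = max { d ≥ 1 : γ_d > ε² }`, with `d(ε) = 0` if `γ_1 ≤ ε²`
(a well-defined maximum when `γ_d → 0`). -/
def dEps (γ : ℕ → ℝ) (ε : ℝ) : ℕ := sSup {d : ℕ | 1 ≤ d ∧ ε ^ 2 < γ d}

/-! For a tuple `k`, take `ε² = ½ ∏ λ_{i,k_i} = ½ ∏ γ_i λ_{k_i}`. Since `j ↦ λ_{i,j}` is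
non-increasing, the whole box `∏ [1, k_i]` lies in `A_{ε,d}`, so `∑ log k_i ≤ log n(ε,d)`, while
`log ε⁻¹ ≤ 1 + ∑ log γ_i⁻¹ + ∑ log λ_{k_i}⁻¹`. When `d + ε⁻¹` is large, weak tractability makes
`log n(ε,d)` small compared with `d^t + (1 + log ε⁻¹)^s`, which gives the bound. When `d + ε⁻¹` is
bounded, `λ_{max k_i} ≥ ∏ γ_i λ_{k_i} > ε²` is bounded below; but `n(ε,d) < ∞` forces `λ_j → 0`,
so `max k_i` is bounded as well, and `d + max k_i` cannot be large. -/

namespace Finset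

variable {ι R : Type*} [CommMonoidWithZero R] [Preorder R] [ZeroLEOneClass R] [PosMulMono R]

theorem prod_le_of_forall_le_one {s : Finset ι} {f : ι → R} (h0 : ∀ j ∈ s, 0 ≤ f j)
    (h1 : ∀ j ∈ s, f j ≤ 1) {i : ι} (hi : i ∈ s) : ∏ j ∈ s, f j ≤ f i := by
  simpa using prod_le_prod_of_subset_of_le_one (singleton_subset_iff.2 hi) h0 fun j hj _ => h1 j hj

end Finset

theorem sum_log_inv_nonneg {ι : Type*} {s : Finset ι} {f : ι → ℝ} (h0 : ∀ i ∈ s, 0 ≤ f i)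
    (h1 : ∀ i ∈ s, f i ≤ 1) : 0 ≤ ∑ i ∈ s, Real.log (f i)⁻¹ :=
  Finset.sum_nonneg fun i hi => by
    rw [Real.log_inv]
    exact neg_nonneg.2 (Real.log_nonpos (h0 i hi) (h1 i hi))

theorem sum_log_le_log_max_one {ι : Type*} {s : Finset ι} {k : ι → ℕ} {N : ℕ}
    (hk : ∀ i ∈ s, k i ≠ 0) (h : ∏ i ∈ s, k i ≤ N) :
    ∑ i ∈ s, Real.log (k i) ≤ Real.log (max 1 N) := by
  have hprod : (0 : ℝ) < ∏ i ∈ s, (k i : ℝ) :=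
    Finset.prod_pos fun i hi => Nat.cast_pos.2 (Nat.pos_of_ne_zero (hk i hi))
  rw [← Real.log_prod fun i hi => by exact_mod_cast hk i hi]
  refine Real.log_le_log hprod (le_max_of_le_right ?_)
  exact_mod_cast h

theorem rpow_add_add_le {a b c p : ℝ} (ha : 0 ≤ a) (hb : 0 ≤ b) (hc : 0 ≤ c) (hp : 0 ≤ p) :
    (a + b + c) ^ p ≤ 3 ^ p * (a ^ p + b ^ p + c ^ p) := by
  set m := max a (max b c)
  have hm : m ^ p ≤ a ^ p + b ^ p + c ^ p := by
    have := rpow_nonneg ha p; have := rpow_nonneg hb p; have := rpow_nonneg hc p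
    rw [rpow_max ha (hb.trans (le_max_left b c)) hp, rpow_max hb hc hp]
    exact max_le (by linarith) (max_le (by linarith) (by linarith))
  calc (a + b + c) ^ p ≤ (3 * m) ^ p := by
        gcongr
        linarith [le_max_left a (max b c), le_max_left b c, le_max_right b c,
          le_max_right a (max b c)]
    _ = 3 ^ p * m ^ p := mul_rpow (by norm_num) (by positivity)
    _ ≤ 3 ^ p * (a ^ p + b ^ p + c ^ p) := by gcongr

theorem add_rpow_le_mul_add_rpow_add_rpow {x a b L s : ℝ} (hx : 1 ≤ x) (ha : 0 ≤ a) (hb : 0 ≤ b)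
    (hL : 0 ≤ L) (hLab : L ≤ 2 + a + b) (hs : 0 ≤ s) :
    x + L ^ s ≤ (1 + 6 ^ s) * (x + a ^ s + b ^ s) := by
  have h6 : (6 : ℝ) ^ s = 3 ^ s * 2 ^ s := by rw [← mul_rpow] <;> norm_num
  have h36 : (3 : ℝ) ^ s ≤ 6 ^ s := by gcongr; norm_num
  have hLs : L ^ s ≤ 3 ^ s * (2 ^ s + a ^ s + b ^ s) :=
    (rpow_le_rpow hL hLab hs).trans (rpow_add_add_le (by norm_num) ha hb hs)
  have := rpow_nonneg ha s; have := rpow_nonneg hb s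
  have := rpow_pos_of_pos (by norm_num : (0 : ℝ) < 6) s
  nlinarith

theorem le_div_rpow_of_div_rpow_lt {M s x a b L D y : ℝ} (hM : 0 < M) (hD : 0 < D) (hs : 0 ≤ s)
    (hx : 1 ≤ x) (ha : 0 ≤ a) (hb : 0 ≤ b) (hL0 : 0 ≤ L) (hL : L ≤ 2 + a + b) (hDy : D ≤ y)
    (hy : y / (x + L ^ s) < 1 / (M * (1 + 6 ^ s))) : M ≤ (x + a ^ s + b ^ s) / D := by
  have hden := add_rpow_le_mul_add_rpow_add_rpow hx ha hb hL0 hL hs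
  have hden0 : 0 < x + L ^ s := by linarith [rpow_nonneg hL0 s]
  rw [le_div_iff₀ hD]
  calc M * D ≤ M * (1 / (M * (1 + 6 ^ s)) * (x + L ^ s)) := by
        gcongr
        exact hDy.trans ((div_lt_iff₀ hden0).1 hy).le
    _ = (x + L ^ s) / (1 + 6 ^ s) := by field_simp
    _ ≤ x + a ^ s + b ^ s := by rw [div_le_iff₀ (by positivity)]; linarith

section

variable {γ lam : ℕ → ℝ}

theorem lamKJ_of_ne_one {k j : ℕ} (hj : j ≠ 1) : lamKJ γ lam k j = γ k * lam j := if_neg hj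

theorem antitoneOn_lamKJ {k : ℕ} (hlam : AntitoneOn lam (Ici 1)) (hlam1 : lam 1 = 1)
    (hγ0 : 0 ≤ γ k) (hγ1 : γ k ≤ 1) : AntitoneOn (lamKJ γ lam k) (Ici 1) := by
  intro a ha b hb hab
  unfold lamKJ
  split_ifs with hb1 ha1 ha1
  · rfl
  · exact absurd (le_antisymm (hb1 ▸ hab) ha) ha1
  · have : lam b ≤ 1 := hlam1 ▸ hlam (mem_Ici.2 le_rfl) hb (ha1 ▸ hab)
    nlinarith
  · exact mul_le_mul_of_nonneg_left (hlam ha hb hab) hγ0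

theorem card_box_le_infoN {d : ℕ} {k : Fin d → ℕ} {ε : ℝ}
    (hanti : ∀ i : Fin d, AntitoneOn (lamKJ γ lam (i.1 + 1)) (Ici 1)) (hk : ∀ i, 1 ≤ k i)
    (hk0 : ∀ i, 0 ≤ lamKJ γ lam (i.1 + 1) (k i))
    (hε : ε ^ 2 < ∏ i, lamKJ γ lam (i.1 + 1) (k i)) :
    ((∏ i, k i : ℕ) : ℕ∞) ≤ infoN γ lam ε d := by
  have hbox : (↑(Fintype.piFinset fun i => Finset.Icc 1 (k i)) : Set (Fin d → ℕ)) ⊆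
      {n | (∀ i, 1 ≤ n i) ∧ ε ^ 2 < ∏ i, lamKJ γ lam (i.1 + 1) (n i)} := by
    intro n hn
    simp only [Finset.mem_coe, Fintype.mem_piFinset, Finset.mem_Icc] at hn
    refine ⟨fun i => (hn i).1, hε.trans_le (Finset.prod_le_prod (fun i _ => hk0 i) fun i _ => ?_)⟩
    exact hanti i (mem_Ici.2 (hn i).1) (mem_Ici.2 (hk i)) (hn i).2
  calc ((∏ i, k i : ℕ) : ℕ∞)
      = (↑(Fintype.piFinset fun i => Finset.Icc 1 (k i)) : Set (Fin d → ℕ)).encard := by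
        rw [Set.encard_coe_eq_coe_finsetCard, Fintype.card_piFinset]
        simp
    _ ≤ infoN γ lam ε d := Set.encard_le_encard hbox

theorem encard_setOf_lamKJ_le_infoN {d : ℕ} (hd : 1 ≤ d) (ε : ℝ) :
    {j | 1 ≤ j ∧ ε ^ 2 < lamKJ γ lam 1 j}.encard ≤ infoN γ lam ε d := by
  let i₀ : Fin d := ⟨0, hd⟩
  let e : ℕ → Fin d → ℕ := fun j i => if i = i₀ then j else 1
  have he : Function.Injective e := fun a b hab => by simpa [e] using congrFun hab i₀
  rw [← he.injOn.encard_image]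
  refine Set.encard_le_encard ?_
  rintro _ ⟨j, ⟨hj, hjε⟩, rfl⟩
  refine ⟨fun i => by by_cases h : i = i₀ <;> simp [e, h, hj], ?_⟩
  rwa [Finset.prod_eq_single i₀ (fun i _ hi => by simp [e, hi, lamKJ]) (by simp)]

theorem ExpSTWT.exists_infoN_ne_top {s t : ℝ} (hwt : ExpSTWT γ lam s t) {ε : ℝ} (hε0 : 0 < ε)
    (hε1 : ε ≤ 1) : ∃ d, 1 ≤ d ∧ infoN γ lam ε d ≠ ⊤ := by
  obtain ⟨T, hT⟩ := hwt 1 one_pos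
  obtain ⟨d, hd⟩ := exists_nat_ge T
  obtain ⟨N, hN, -⟩ := hT (d + 1) d.succ_pos ε hε0 hε1 (by push_cast; linarith [inv_pos.2 hε0])
  exact ⟨d + 1, d.succ_pos, hN ▸ ENat.natCast_ne_top N⟩

theorem ExpSTWT.bddAbove_setOf_lt_lam {s t c : ℝ} (hwt : ExpSTWT γ lam s t) (hγ1 : 0 < γ 1)
    (hc : 0 < c) : BddAbove {j | 2 ≤ j ∧ c < lam j} := by
  set ε := min 1 (γ 1 * c / 2)
  have hε0 : 0 < ε := by positivity
  have hε1 : ε ≤ 1 := min_le_left _ _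
  have hεc : ε ^ 2 < γ 1 * c := calc
    ε ^ 2 ≤ ε := pow_le_of_le_one hε0.le hε1 two_ne_zero
    _ ≤ γ 1 * c / 2 := min_le_right _ _
    _ < γ 1 * c := half_lt_self (by positivity)
  obtain ⟨d, hd, hfin⟩ := hwt.exists_infoN_ne_top hε0 hε1
  have hsub : {j | 2 ≤ j ∧ c < lam j} ⊆ {j | 1 ≤ j ∧ ε ^ 2 < lamKJ γ lam 1 j} := by
    rintro j ⟨hj, hjc⟩
    refine ⟨by omega, ?_⟩
    rw [lamKJ_of_ne_one (by omega)]
    exact hεc.trans_le (by gcongr)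
  exact ((Set.encard_ne_top_iff.1 (ne_top_of_le_ne_top hfin
    (encard_setOf_lamKJ_le_infoN hd ε))).subset hsub).bddAbove

theorem exists_eps_prod_le_infoN {d : ℕ} {k : Fin d → ℕ} (hlam_anti : AntitoneOn lam (Ici 1))
    (hlam1 : lam 1 = 1) (hγ_pos : ∀ j, 1 ≤ j → 0 < γ j) (hγ_le : ∀ j, 1 ≤ j → γ j ≤ 1)
    (hk : ∀ i, 2 ≤ k i) (hlam_pos : ∀ i, 0 < lam (k i)) :
    ∃ ε : ℝ, 0 < ε ∧ ε ≤ 1 ∧ ((∏ i, k i : ℕ) : ℕ∞) ≤ infoN γ lam ε d ∧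
      0 ≤ ∑ i : Fin d, Real.log ((γ (i.1 + 1))⁻¹) ∧ 0 ≤ ∑ i : Fin d, Real.log ((lam (k i))⁻¹) ∧
      1 + Real.log ε⁻¹ ≤
        2 + ∑ i : Fin d, Real.log ((γ (i.1 + 1))⁻¹) + ∑ i : Fin d, Real.log ((lam (k i))⁻¹) ∧
      ∀ i, ε ^ 2 < lam (k i) := by
  have hγ0 (i : Fin d) : 0 < γ (i.1 + 1) := hγ_pos _ i.1.succ_pos
  have hγ1 (i : Fin d) : γ (i.1 + 1) ≤ 1 := hγ_le _ i.1.succ_pos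
  have hlamk1 (i : Fin d) : lam (k i) ≤ 1 :=
    hlam1 ▸ hlam_anti (mem_Ici.2 le_rfl) (mem_Ici.2 (by linarith [hk i])) (by linarith [hk i])
  have hw (i : Fin d) : lamKJ γ lam (i.1 + 1) (k i) = γ (i.1 + 1) * lam (k i) :=
    lamKJ_of_ne_one (by linarith [hk i])
  have hw0 (i : Fin d) : 0 < γ (i.1 + 1) * lam (k i) := mul_pos (hγ0 i) (hlam_pos i)
  have hw1 (i : Fin d) : γ (i.1 + 1) * lam (k i) ≤ 1 :=
    mul_le_one₀ (hγ1 i) (hlam_pos i).le (hlamk1 i)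
  set P := ∏ i, γ (i.1 + 1) * lam (k i)
  have hP0 : 0 < P := Finset.prod_pos fun i _ => hw0 i
  have hPk (i : Fin d) : P ≤ lam (k i) :=
    (Finset.prod_le_of_forall_le_one (fun j _ => (hw0 j).le) (fun j _ => hw1 j)
      (Finset.mem_univ i)).trans (mul_le_of_le_one_left (hlam_pos i).le (hγ1 i))
  have hlogP : Real.log P⁻¹ =
      ∑ i : Fin d, Real.log ((γ (i.1 + 1))⁻¹) + ∑ i : Fin d, Real.log ((lam (k i))⁻¹) := by
    simp only [Real.log_inv, P, Real.log_prod fun i _ => (hw0 i).ne',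
      Real.log_mul (hγ0 _).ne' (hlam_pos _).ne', Finset.sum_add_distrib, neg_add,
      Finset.sum_neg_distrib]
  have hP1 : P ≤ 1 := Finset.prod_le_one (fun i _ => (hw0 i).le) fun i _ => hw1 i
  have hlogε : Real.log (√(P / 2))⁻¹ = (Real.log 2 + Real.log P⁻¹) / 2 := by
    rw [Real.log_inv, Real.log_sqrt (by positivity), Real.log_div hP0.ne' two_ne_zero,
      Real.log_inv]
    ring
  refine ⟨√(P / 2), by positivity, Real.sqrt_le_one.2 (by linarith), ?_,
    sum_log_inv_nonneg (fun i _ => (hγ0 i).le) (fun i _ => hγ1 i),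
    sum_log_inv_nonneg (fun i _ => (hlam_pos i).le) (fun i _ => hlamk1 i), ?_, fun i => ?_⟩
  · refine card_box_le_infoN (fun i => antitoneOn_lamKJ hlam_anti hlam1 (hγ0 i).le (hγ1 i))
      (fun i => by linarith [hk i]) (fun i => hw i ▸ (hw0 i).le) ?_
    rw [Real.sq_sqrt (by positivity), Finset.prod_congr rfl fun i _ => hw i]
    linarith
  · have := Real.log_nonneg ((one_le_inv₀ hP0).2 hP1)
    linarith [Real.log_two_lt_d9]
  · rw [Real.sq_sqrt (by positivity)]
    linarith [hPk i]

end

theorem stmt13_general (γ lam : ℕ → ℝ)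
    (hlam_anti : AntitoneOn lam (Set.Ici 1)) (hlam1 : lam 1 = 1)
    (hγ_pos : ∀ j, 1 ≤ j → 0 < γ j) (hγ_le : ∀ j, 1 ≤ j → γ j ≤ 1)
    (s t : ℝ) (hs : 0 < s) (ht : 0 < t) (hwt : ExpSTWT γ lam s t) :
    ∀ M : ℝ, 0 < M → ∃ T : ℝ, 0 < T ∧
      ∀ d : ℕ, 1 ≤ d → ∀ k : Fin d → ℕ, (∀ i, 2 ≤ k i) → (∀ i, 0 < lam (k i)) →
        T ≤ (d : ℝ) + ((Finset.univ.sup k : ℕ) : ℝ) →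
        M ≤ ((d : ℝ) ^ t + (∑ i : Fin d, Real.log ((γ (i.1 + 1))⁻¹)) ^ s +
              (∑ i : Fin d, Real.log ((lam (k i))⁻¹)) ^ s) /
            (∑ i : Fin d, Real.log (k i)) := by
  intro M hM
  obtain ⟨T₂, hT₂⟩ := hwt (1 / (M * (1 + 6 ^ s))) (by positivity)
  set T₀ := max T₂ 1
  obtain ⟨J, hJ⟩ := hwt.bddAbove_setOf_lt_lam (c := T₀⁻¹ ^ 2) (hγ_pos 1 le_rfl) (by positivity)
  refine ⟨T₀ + J, by positivity, fun d hd k hk hlam_pos hT => ?_⟩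
  obtain ⟨ε, hε0, hε1, hbox, hγ, hlam, hlogε, hεk⟩ :=
    exists_eps_prod_le_infoN hlam_anti hlam1 hγ_pos hγ_le hk hlam_pos
  rcases le_or_gt T₂ (d + ε⁻¹) with hlarge | hsmall
  · obtain ⟨N, hN, hNδ⟩ := hT₂ d hd ε hε0 hε1 hlarge
    have hD : 0 < ∑ i : Fin d, Real.log (k i) := Finset.sum_pos
      (fun i _ => Real.log_pos (by exact_mod_cast hk i)) ⟨⟨0, hd⟩, Finset.mem_univ _⟩
    exact le_div_rpow_of_div_rpow_lt hM hD hs.le (Real.one_le_rpow (by exact_mod_cast hd) ht.le)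
      hγ hlam (by linarith [Real.log_nonneg ((one_le_inv₀ hε0).2 hε1)]) hlogε
      (sum_log_le_log_max_one (fun i _ => by linarith [hk i]) (by exact_mod_cast hN ▸ hbox)) hNδ
  · obtain ⟨i₀, -, hi₀⟩ := Finset.univ.exists_mem_eq_sup ⟨⟨0, hd⟩, Finset.mem_univ _⟩ k
    have hd₀ : (d : ℝ) < T₀ := by linarith [inv_pos.2 hε0, le_max_left T₂ 1]
    have hεT₀ : T₀⁻¹ < ε :=
      inv_lt_of_inv_lt₀ hε0 (by linarith [le_max_left T₂ 1, d.cast_nonneg (α := ℝ)])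
    have hkJ : k i₀ ≤ J :=
      hJ ⟨hk i₀, (pow_lt_pow_left₀ hεT₀ (by positivity) two_ne_zero).trans (hεk i₀)⟩
    have : ((Finset.univ.sup k : ℕ) : ℝ) ≤ J := by exact_mod_cast hi₀ ▸ hkJ
    linarith

/-- Lemma 4: if EXP-(s,t)-WT holds, then for every M > 0 there is T > 0
such that for all d ≥ 1 and integers k_1,…,k_d ≥ 2 with λ_{k_i} > 0, if
d + max_i k_i ≥ T then
(d^t + (∑ log γ_i⁻¹)^s + (∑ log λ_{k_i}⁻¹)^s) / (∑ log k_i) ≥ M. -/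
theorem stmt13 (γ lam : ℕ → ℝ)
    (hlam_anti : AntitoneOn lam (Set.Ici 1)) (hlam1 : lam 1 = 1) (hlam2 : 0 < lam 2)
    (hlam_nonneg : ∀ j, 1 ≤ j → 0 ≤ lam j)
    (hγ_anti : AntitoneOn γ (Set.Ici 1))
    (hγ_pos : ∀ j, 1 ≤ j → 0 < γ j) (hγ_le : ∀ j, 1 ≤ j → γ j ≤ 1)
    (s t : ℝ) (hs : 0 < s) (ht : 0 < t) (hwt : ExpSTWT γ lam s t) :
    ∀ M : ℝ, 0 < M → ∃ T : ℝ, 0 < T ∧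
      ∀ d : ℕ, 1 ≤ d → ∀ k : Fin d → ℕ, (∀ i, 2 ≤ k i) → (∀ i, 0 < lam (k i)) →
        T ≤ (d : ℝ) + ((Finset.univ.sup k : ℕ) : ℝ) →
        M ≤ ((d : ℝ) ^ t + (∑ i : Fin d, Real.log ((γ (i.1 + 1))⁻¹)) ^ s +
              (∑ i : Fin d, Real.log ((lam (k i))⁻¹)) ^ s) /
            (∑ i : Fin d, Real.log (k i)) :=
  stmt13_general γ lam hlam_anti hlam1 hγ_pos hγ_le s t hs ht hwt
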